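/- arXiv:0709.3208 — 6 statements merged into one kernel-verified Lean document; each statement's English description precedes it below -/
import Mathlib

section
/- Let λ, μ ≥ 0 be real numbers with (λ, μ) ≠ (1, 1), and let w ≥ 1 be an integer. Then p = 1 is a multiple root of the polynomial D_w(p) = (1 − λ²p²)(1 − μ²p²) − (λ² − p²)(μ² − p²)p^{2w} if and only if λ ≠ 1, μ ≠ 1 and w = 2(λ²μ² − 1)/((λ² − 1)(μ² − 1)). In particular, for fixed (λ, μ) ≠ (1, 1) there is at most one value of w for which D_w has a multiple root at p = 1. -/
open Polynomial

/-- The denominator polynomial `D_w(p) = (1 − λ²p²)(1 − μ²p²) − (λ² − p²)(μ² − p²)p^{2w}`,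
viewed as a polynomial over `ℂ` with real parameters `λ, μ`. -/
noncomputable def Dpoly (lam mu : ℝ) (w : ℕ) : Polynomial ℂ :=
  (1 - C ((lam : ℂ) ^ 2) * X ^ 2) * (1 - C ((mu : ℂ) ^ 2) * X ^ 2) -
    (C ((lam : ℂ) ^ 2) - X ^ 2) * (C ((mu : ℂ) ^ 2) - X ^ 2) * X ^ (2 * w)

lemma Dpoly_ne_zero (lam mu : ℝ) (w : ℕ) (hw : 1 ≤ w) : Dpoly lam mu w ≠ 0 := by
  intro h
  have : (Dpoly lam mu w).eval 0 = 1 := by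
    simp [Dpoly, zero_pow, (by omega : 2 * w ≠ 0)]
    omega
  rw [h] at this; simp at this

lemma Dpoly_eval_one (lam mu : ℝ) (w : ℕ) : (Dpoly lam mu w).eval 1 = 0 := by
  simp [Dpoly]; ring

lemma Dpoly_deriv_eval_one (lam mu : ℝ) (w : ℕ) :
    (derivative (Dpoly lam mu w)).eval 1 =
      4 * ((lam:ℂ)^2 * (mu:ℂ)^2 - 1) - 2 * (w:ℂ) * (((lam:ℂ)^2 - 1) * ((mu:ℂ)^2 - 1)) := by
  simp [Dpoly, derivative_mul, derivative_sub, derivative_X_pow]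
  ring

lemma Dpoly_cond (lam mu : ℝ) (w : ℕ) (hw : 1 ≤ w) :
    2 ≤ (Dpoly lam mu w).rootMultiplicity 1 ↔
      2 * (lam^2 * mu^2 - 1) = (w:ℝ) * ((lam^2 - 1) * (mu^2 - 1)) := by
  rw [show (2 ≤ (Dpoly lam mu w).rootMultiplicity 1) ↔
    (1 < (Dpoly lam mu w).rootMultiplicity 1) from Iff.rfl,
    one_lt_rootMultiplicity_iff_isRoot (Dpoly_ne_zero lam mu w hw)]
  simp only [IsRoot, Dpoly_eval_one, Dpoly_deriv_eval_one, true_and]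
  rw [show (4 : ℂ) * ((lam:ℂ)^2 * (mu:ℂ)^2 - 1) - 2 * (w:ℂ) * (((lam:ℂ)^2 - 1) * ((mu:ℂ)^2 - 1))
      = ((4 * (lam^2 * mu^2 - 1) - 2 * (w:ℝ) * ((lam^2 - 1) * (mu^2 - 1)) : ℝ) : ℂ) by
    push_cast; ring, Complex.ofReal_eq_zero, sub_eq_zero]
  constructor <;> intro h <;> linarith

lemma ne_one_of_cond (lam mu : ℝ) (hlam : 0 ≤ lam) (hmu : 0 ≤ mu)
    (hne : ¬(lam = 1 ∧ mu = 1)) (w : ℕ)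
    (hE : 2 * (lam^2 * mu^2 - 1) = (w:ℝ) * ((lam^2 - 1) * (mu^2 - 1))) :
    lam ≠ 1 ∧ mu ≠ 1 := by
  constructor
  · rintro rfl
    have hmu1 : (mu - 1) * (mu + 1) = 0 := by nlinarith
    rcases mul_eq_zero.1 hmu1 with h | h
    · exact hne ⟨rfl, by linarith⟩
    · linarith
  · rintro rfl
    have hl1 : (lam - 1) * (lam + 1) = 0 := by nlinarith
    rcases mul_eq_zero.1 hl1 with h | h
    · exact hne ⟨by linarith, rfl⟩
    · linarith

lemma sq_sub_one_ne (x : ℝ) (hx : 0 ≤ x) (h1 : x ≠ 1) : x^2 - 1 ≠ 0 := by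
  intro h
  have : (x - 1) * (x + 1) = 0 := by nlinarith
  rcases mul_eq_zero.1 this with h' | h'
  · exact h1 (by linarith)
  · nlinarith

/-- for `(λ, μ) ≠ (1, 1)`, `p = 1` is a multiple root of `D_w` iff
`λ ≠ 1`, `μ ≠ 1` and `w = 2(λ²μ² − 1)/((λ² − 1)(μ² − 1))`; in particular there is
at most one value of `w` for which `p = 1` is a multiple root. -/
theorem multiple_root_at_one_iff (lam mu : ℝ) (hlam : 0 ≤ lam) (hmu : 0 ≤ mu)
    (hne : ¬(lam = 1 ∧ mu = 1)) (w : ℕ) (hw : 1 ≤ w) :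
    (2 ≤ (Dpoly lam mu w).rootMultiplicity 1 ↔
      lam ≠ 1 ∧ mu ≠ 1 ∧
        (w : ℝ) = 2 * (lam ^ 2 * mu ^ 2 - 1) / ((lam ^ 2 - 1) * (mu ^ 2 - 1))) ∧
    ∀ w₁ w₂ : ℕ, 1 ≤ w₁ → 1 ≤ w₂ →
      2 ≤ (Dpoly lam mu w₁).rootMultiplicity 1 →
      2 ≤ (Dpoly lam mu w₂).rootMultiplicity 1 → w₁ = w₂ := by
  constructor
  · rw [Dpoly_cond lam mu w hw]
    constructor
    · intro hE
      obtain ⟨hl, hm⟩ := ne_one_of_cond lam mu hlam hmu hne w hE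
      refine ⟨hl, hm, ?_⟩
      rw [eq_div_iff (mul_ne_zero (sq_sub_one_ne lam hlam hl) (sq_sub_one_ne mu hmu hm))]
      linarith
    · rintro ⟨hl, hm, hEq⟩
      rw [eq_div_iff (mul_ne_zero (sq_sub_one_ne lam hlam hl) (sq_sub_one_ne mu hmu hm))] at hEq
      linarith
  · intro w₁ w₂ h1 h2 r1 r2
    rw [Dpoly_cond lam mu w₁ h1] at r1
    rw [Dpoly_cond lam mu w₂ h2] at r2
    obtain ⟨hl, hm⟩ := ne_one_of_cond lam mu hlam hmu hne w₁ r1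
    have hc : (lam^2 - 1) * (mu^2 - 1) ≠ 0 :=
      mul_ne_zero (sq_sub_one_ne lam hlam hl) (sq_sub_one_ne mu hmu hm)
    have : (w₁ : ℝ) = (w₂ : ℝ) := by
      have := r1.symm.trans r2
      exact mul_right_cancel₀ hc this
    exact_mod_cast this
end

section
/- Let λ, μ ≥ 0 be real numbers, w ≥ 1 an integer, and t ∈ ℝ such that D_w(e^{it}) = 0, where D_w(p) = (1 − λ²p²)(1 − μ²p²) − (λ² − p²)(μ² − p²)p^{2w}. Set A = (λ² − 1)/(λ² + 1) and B = (μ² − 1)/(μ² + 1). If cos(wt) ≠ 0, cos t ≠ 0, and A·B − tan²t ≠ 0, then tan(wt) = (A + B)·tan t / (A·B − tan²t). -/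
/-- if `p = e^{it}` is a root of
`D_w(p) = (1 − λ²p²)(1 − μ²p²) − (λ² − p²)(μ² − p²)p^{2w}` on the unit circle, then,
with `A = (λ² − 1)/(λ² + 1)` and `B = (μ² − 1)/(μ² + 1)`, and assuming
`cos(wt) ≠ 0`, `cos t ≠ 0` and `A·B − tan²t ≠ 0`, one has
`tan(wt) = (A + B)·tan t / (A·B − tan²t)`. -/
theorem tan_equation_for_circle_roots (lam mu t : ℝ) (hlam : 0 ≤ lam) (hmu : 0 ≤ mu)
    (w : ℕ) (hw : 1 ≤ w)
    (hroot :
      (1 - (lam : ℂ) ^ 2 * Complex.exp (Complex.I * (t : ℂ)) ^ 2) *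
          (1 - (mu : ℂ) ^ 2 * Complex.exp (Complex.I * (t : ℂ)) ^ 2) -
        ((lam : ℂ) ^ 2 - Complex.exp (Complex.I * (t : ℂ)) ^ 2) *
          ((mu : ℂ) ^ 2 - Complex.exp (Complex.I * (t : ℂ)) ^ 2) *
          Complex.exp (Complex.I * (t : ℂ)) ^ (2 * w) = 0)
    (hcoswt : Real.cos (w * t) ≠ 0) (hcost : Real.cos t ≠ 0)
    (hden : (lam ^ 2 - 1) / (lam ^ 2 + 1) * ((mu ^ 2 - 1) / (mu ^ 2 + 1)) -
      Real.tan t ^ 2 ≠ 0) :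
    Real.tan (w * t) =
      ((lam ^ 2 - 1) / (lam ^ 2 + 1) + (mu ^ 2 - 1) / (mu ^ 2 + 1)) * Real.tan t /
        ((lam ^ 2 - 1) / (lam ^ 2 + 1) * ((mu ^ 2 - 1) / (mu ^ 2 + 1)) -
          Real.tan t ^ 2) := by
  simp only [Real.tan_eq_sin_div_cos] at hden ⊢
  set a := Real.cos t with ha_def
  set b := Real.sin t with hb_def
  set c := Real.cos (↑w * t) with hc_def
  set s := Real.sin (↑w * t) with hs_def
  set X : ℝ := (lam^2-1)*(mu^2-1)*a^2 - (lam^2+1)*(mu^2+1)*b^2 with hX_def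
  set Y : ℝ := ((lam^2-1)*(mu^2+1) + (mu^2-1)*(lam^2+1))*a*b with hY_def
  have hab : a^2 + b^2 = 1 := Real.cos_sq_add_sin_sq t
  have hcs : c^2 + s^2 = 1 := Real.cos_sq_add_sin_sq _
  have habc : (a:ℂ)^2 + (b:ℂ)^2 = 1 := by exact_mod_cast congrArg (Complex.ofReal ·) hab
  have hcsc : (c:ℂ)^2 + (s:ℂ)^2 = 1 := by exact_mod_cast congrArg (Complex.ofReal ·) hcs
  set u : ℂ := (a:ℂ) + b * Complex.I with hu_def
  set v : ℂ := (a:ℂ) - b * Complex.I with hv_def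
  set P : ℂ := (c:ℂ) + s * Complex.I with hP_def
  set Q : ℂ := (c:ℂ) - s * Complex.I with hQ_def
  have huv : u * v = 1 := by
    rw [hu_def, hv_def]
    linear_combination habc + (-(b:ℂ)^2) * Complex.I_sq
  have hPQ : P * Q = 1 := by
    rw [hP_def, hQ_def]
    linear_combination hcsc + (-(s:ℂ)^2) * Complex.I_sq
  have hE : Complex.exp (Complex.I * t) = u := by
    rw [mul_comm, Complex.exp_mul_I, ← Complex.ofReal_cos, ← Complex.ofReal_sin, hu_def]
  have hEw : Complex.exp (Complex.I * t) ^ (2*w) = P^2 := by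
    have h1 : Complex.exp (Complex.I * ((w:ℝ) * t : ℝ)) = P := by
      rw [mul_comm, Complex.exp_mul_I, ← Complex.ofReal_cos, ← Complex.ofReal_sin, hP_def]
    rw [← h1, ← Complex.exp_nat_mul, ← Complex.exp_nat_mul]
    congr 1
    push_cast
    ring
  rw [hEw, hE] at hroot
  -- factor out u^2
  have key : u^2 * ((v - lam^2*u)*(v - mu^2*u) - (lam^2*v - u)*(mu^2*v - u)*P^2) = 0 := by
    linear_combination hroot +
      (((u*v + 1 - ((lam:ℂ)^2+(mu:ℂ)^2)*u^2)
        - ((lam:ℂ)^2*(mu:ℂ)^2*(u*v+1) - ((lam:ℂ)^2+(mu:ℂ)^2)*u^2)*P^2)) * huv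
  have hune : u ≠ 0 := left_ne_zero_of_mul_eq_one huv
  have key2 : (v - lam^2*u)*(v - mu^2*u) - (lam^2*v - u)*(mu^2*v - u)*P^2 = 0 :=
    (mul_eq_zero.mp key).resolve_left (pow_ne_zero 2 hune)
  -- components
  have hXY : (v - lam^2*u)*(v - mu^2*u) = (X:ℂ) + Y * Complex.I := by
    rw [hu_def, hv_def]
    push_cast [hX_def, hY_def]
    linear_combination (((lam:ℂ)^2+1)*((mu:ℂ)^2+1)*(b:ℂ)^2) * Complex.I_sq
  have hXY' : (lam^2*v - u)*(mu^2*v - u) = (X:ℂ) - Y * Complex.I := by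
    rw [hu_def, hv_def]
    push_cast [hX_def, hY_def]
    linear_combination (((lam:ℂ)^2+1)*((mu:ℂ)^2+1)*(b:ℂ)^2) * Complex.I_sq
  rw [hXY, hXY', sub_eq_zero] at key2
  have hz2 : ((X:ℝ) : ℂ) + ((Y:ℝ):ℂ) * Complex.I =
      ((X*(c^2-s^2) + 2*Y*c*s : ℝ):ℂ) + ((2*X*c*s - Y*(c^2-s^2) : ℝ):ℂ) * Complex.I := by
    push_cast
    rw [hP_def] at key2
    linear_combination key2 + (((X:ℂ)*s^2 - 2*Y*c*s - Y*s^2*Complex.I)) * Complex.I_sq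
  have him : Y = 2*X*c*s - Y*(c^2-s^2) := by
    have h3 := (Complex.ext_iff.mp hz2).2
    simp only [Complex.add_im, Complex.mul_im, Complex.ofReal_im, Complex.ofReal_re,
      Complex.I_im, Complex.I_re, mul_zero, mul_one, zero_mul, add_zero, zero_add] at h3
    linarith
  have hYX : Y * c = X * s := by
    have h4 : (Y*c - X*s) * (2*c^2) = 0 := by linear_combination c * him + (Y*c) * hcs
    have h5 := (mul_eq_zero.mp h4).resolve_right (by positivity)
    linarith [sub_eq_zero.mp h5]
  have hlam1 : (0:ℝ) < lam^2 + 1 := by positivity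
  have hmu1 : (0:ℝ) < mu^2 + 1 := by positivity
  have hXalt : X = ((lam^2+1)*(mu^2+1)*a^2) *
      ((lam ^ 2 - 1) / (lam ^ 2 + 1) * ((mu ^ 2 - 1) / (mu ^ 2 + 1)) - (b/a)^2) := by
    rw [hX_def]
    field_simp
  have hXne : X ≠ 0 := by
    rw [hXalt]
    exact mul_ne_zero (by positivity) hden
  calc s / c = Y / X := by
        rw [div_eq_div_iff hcoswt hXne]
        linear_combination - hYX
    _ = ((lam ^ 2 - 1) / (lam ^ 2 + 1) + (mu ^ 2 - 1) / (mu ^ 2 + 1)) * (b/a) /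
        ((lam ^ 2 - 1) / (lam ^ 2 + 1) * ((mu ^ 2 - 1) / (mu ^ 2 + 1)) - (b/a)^2) := by
        rw [hXalt, hY_def]
        field_simp
end

section
/- Let λ, μ be real numbers with 0 ≤ λ < 1 and 0 ≤ μ < 1. Then there exists W such that for every integer w ≥ W, all 2w + 4 complex roots (counted with multiplicity) of the polynomial D_w(p) = (1 − λ²p²)(1 − μ²p²) − (λ² − p²)(μ² − p²)p^{2w} lie on the unit circle |p| = 1. -/
/-!
Writing `q = p²`, `D_w(p) = A(q) - B(q) qʷ` with `A(q) = (1 - λ²q)(1 - μ²q)` and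
`B(q) = (λ² - q)(μ² - q)`. Each factor `(a - q)/(1 - aq)` of `B/A` is a Blaschke factor, bounded
by `1` on the unit disk, so `|B(q) qʷ| < |A(q)|` for `|q| < 1` and `D_w` has no root in the open
disk. Since `D_w(1/p) = -D_w(p)/p^{2w+4}`, it has none outside the closed disk either.
-/

open Polynomial

lemma norm_ofReal_sub_le_norm_one_sub_ofReal_mul {a : ℝ} (ha : |a| ≤ 1) {z : ℂ} (hz : ‖z‖ ≤ 1) :
    ‖(a : ℂ) - z‖ ≤ ‖1 - a * z‖ := by
  have hz2 : Complex.normSq z ≤ 1 := by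
    rw [← Complex.sq_norm]
    exact pow_le_one₀ (norm_nonneg z) hz
  have ha2 : a ^ 2 ≤ 1 := (sq_le_one_iff_abs_le_one a).2 ha
  rw [← sq_le_sq₀ (norm_nonneg _) (norm_nonneg _), Complex.sq_norm, Complex.sq_norm]
  simp only [Complex.normSq_apply, Complex.sub_re, Complex.sub_im, Complex.mul_re,
    Complex.mul_im, Complex.ofReal_re, Complex.ofReal_im, Complex.one_re, Complex.one_im] at hz2 ⊢
  -- `|1 - a z|² - |a - z|² = (1 - a²)(1 - |z|²)`
  nlinarith [mul_nonneg (sub_nonneg.2 ha2) (sub_nonneg.2 hz2)]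

lemma one_sub_ofReal_mul_ne_zero {a : ℝ} (ha : |a| ≤ 1) {z : ℂ} (hz : ‖z‖ < 1) :
    1 - (a : ℂ) * z ≠ 0 := by
  refine sub_ne_zero.2 fun h => ?_
  have : ‖(a : ℂ) * z‖ < 1 := by
    rw [norm_mul, Complex.norm_real, Real.norm_eq_abs]
    exact mul_lt_one_of_nonneg_of_lt_one_right ha (norm_nonneg z) hz
  simp [← h] at this

lemma norm_sub_mul_sub_mul_pow_lt {a b : ℝ} (ha : |a| ≤ 1) (hb : |b| ≤ 1) {q : ℂ} (hq : ‖q‖ < 1)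
    {w : ℕ} (hw : w ≠ 0) :
    ‖((a : ℂ) - q) * (b - q) * q ^ w‖ < ‖(1 - (a : ℂ) * q) * (1 - b * q)‖ := by
  have hA : 0 < ‖(1 - (a : ℂ) * q) * (1 - b * q)‖ :=
    norm_pos_iff.2 (mul_ne_zero (one_sub_ofReal_mul_ne_zero ha hq)
      (one_sub_ofReal_mul_ne_zero hb hq))
  calc ‖((a : ℂ) - q) * (b - q) * q ^ w‖
      ≤ ‖(1 - (a : ℂ) * q) * (1 - b * q)‖ * ‖q ^ w‖ := by
        rw [norm_mul _ (q ^ w), norm_mul, norm_mul]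
        gcongr
        exacts [norm_ofReal_sub_le_norm_one_sub_ofReal_mul ha hq.le,
          norm_ofReal_sub_le_norm_one_sub_ofReal_mul hb hq.le]
    _ < ‖(1 - (a : ℂ) * q) * (1 - b * q)‖ := by
        rw [norm_pow]
        exact mul_lt_of_lt_one_right hA (pow_lt_one₀ (norm_nonneg q) hq hw)

section Dpoly

variable (lam mu : ℝ) (w : ℕ)

lemma Dpoly_eval (p : ℂ) :
    (Dpoly lam mu w).eval p =
      (1 - (lam : ℂ) ^ 2 * p ^ 2) * (1 - (mu : ℂ) ^ 2 * p ^ 2) -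
        ((lam : ℂ) ^ 2 - p ^ 2) * ((mu : ℂ) ^ 2 - p ^ 2) * p ^ (2 * w) := by
  simp [Dpoly]

lemma Dpoly_eval_inv {p : ℂ} (hp : p ≠ 0) :
    (Dpoly lam mu w).eval p⁻¹ = -(Dpoly lam mu w).eval p / p ^ (2 * w + 4) := by
  rw [Dpoly_eval, Dpoly_eval, inv_pow, inv_pow]
  field_simp
  ring

lemma Dpoly_natDegree (hw : w ≠ 0) : (Dpoly lam mu w).natDegree = 2 * w + 4 := by
  unfold Dpoly
  compute_degree!
  any_goals omega
  rw [if_neg hw, if_pos (by omega : 2 * w + 4 = 4 + 2 * w)]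
  simp

variable {lam mu}

lemma Dpoly_eval_ne_zero_of_norm_lt_one (hlam : |lam| ≤ 1) (hmu : |mu| ≤ 1)
    (hw : w ≠ 0) {p : ℂ} (hp : ‖p‖ < 1) : (Dpoly lam mu w).eval p ≠ 0 := by
  have sq_abs_le_one {a : ℝ} (ha : |a| ≤ 1) : |a ^ 2| ≤ 1 := by
    rw [abs_pow]; exact pow_le_one₀ (abs_nonneg a) ha
  have hp2 : ‖p ^ 2‖ < 1 := by
    rw [norm_pow]
    exact pow_lt_one₀ (norm_nonneg p) hp two_ne_zero
  have := norm_sub_mul_sub_mul_pow_lt (sq_abs_le_one hlam) (sq_abs_le_one hmu) hp2 hw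
  push_cast at this
  rw [Dpoly_eval, pow_mul, sub_ne_zero]
  exact fun h => this.ne' (by rw [h])

lemma Dpoly_eval_ne_zero_of_one_lt_norm (hlam : |lam| ≤ 1) (hmu : |mu| ≤ 1)
    (hw : w ≠ 0) {p : ℂ} (hp : 1 < ‖p‖) : (Dpoly lam mu w).eval p ≠ 0 := by
  have hp0 : p ≠ 0 := norm_pos_iff.1 (one_pos.trans hp)
  have := Dpoly_eval_ne_zero_of_norm_lt_one w hlam hmu hw (p := p⁻¹)
    (by rwa [norm_inv, inv_lt_one_iff₀, or_iff_right (not_le.2 (one_pos.trans hp))])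
  rw [Dpoly_eval_inv _ _ _ hp0] at this
  exact fun h => this (by simp [h])

end Dpoly

/-- for `0 ≤ λ < 1` and `0 ≤ μ < 1`, for all sufficiently large `w`
all `2w + 4` roots of `D_w` (with multiplicity) lie on the unit circle. -/
theorem roots_on_circle_desorbed (lam mu : ℝ)
    (hlam0 : 0 ≤ lam) (hlam1 : lam < 1) (hmu0 : 0 ≤ mu) (hmu1 : mu < 1) :
    ∃ W : ℕ, ∀ w : ℕ, W ≤ w →
      (Dpoly lam mu w).roots.card = 2 * w + 4 ∧
      ∀ p ∈ (Dpoly lam mu w).roots, ‖p‖ = 1 := by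
  have hlam : |lam| ≤ 1 := abs_le.2 ⟨by linarith, hlam1.le⟩
  have hmu : |mu| ≤ 1 := abs_le.2 ⟨by linarith, hmu1.le⟩
  refine ⟨1, fun w hw => ⟨?_, fun p hp => ?_⟩⟩
  · rw [IsAlgClosed.card_roots_eq_natDegree, Dpoly_natDegree _ _ _ (by omega)]
  · have hroot := isRoot_of_mem_roots hp
    rcases lt_trichotomy ‖p‖ 1 with h | h | h
    · exact absurd hroot (Dpoly_eval_ne_zero_of_norm_lt_one w hlam hmu (by omega) h)
    · exact h
    · exact absurd hroot (Dpoly_eval_ne_zero_of_one_lt_norm w hlam hmu (by omega) h)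
end

section
/- Let λ, μ be real numbers with λ > 1 and 0 ≤ μ < 1 (or symmetrically 0 ≤ λ < 1 and μ > 1). Then there exists W such that for every integer w ≥ W, the polynomial D_w(p) = (1 − λ²p²)(1 − μ²p²) − (λ² − p²)(μ² − p²)p^{2w} has exactly 2w roots (counted with multiplicity) on the unit circle |p| = 1, and exactly 4 roots with |p| ≠ 1, all of which are real. -/
open Polynomial

/-!
For `|q| = 1` one has `q⁻¹ = conj q`, hence `D_w(q) = q^(w+2) (A(q) - conj A(q))
= 2i q^(w+2) Im A(q)` with `A(q) = B(q) q⁻ʷ` and `B(q) = (q⁻¹ - λ²q)(q⁻¹ - μ²q)`.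
At the `2w + 1` nodes `q = e^{iθ_k}`, `θ_k = (kπ - π/2)/w`, the factor `q⁻ʷ` equals `±i` with
alternating signs, so `Im A = ±Re B`, and `Re B ≤ (1 - λ²)(1 - μ²) < 0`. The intermediate value
theorem then gives `2w` roots at distinct angles in an interval of length `2π`.

On the real axis `D_w(0) = 1`, while for a fixed `t ∈ (1/|λ|, 1)` the value `D_w(t)` tends to
`(1 - λ²t²)(1 - μ²t²) < 0`, so for large `w` there is a root `x ∈ (0, 1)`; the symmetries
`p ↦ -p` and `p ↦ p⁻¹` of the root set add `-x, x⁻¹, -x⁻¹`. Since `deg D_w ≤ 2w + 4`,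
these `2w + 4` roots are all of them.
-/

open Complex Filter Set
open scoped Real ComplexConjugate Topology

theorem Multiset.card_filter_eq_of_card_le_add {α : Type*} {s : Multiset α} {P : α → Prop}
    [DecidablePred P] {A B : Finset α} (hA : ∀ a ∈ A, a ∈ s ∧ P a)
    (hB : ∀ b ∈ B, b ∈ s ∧ ¬P b) (hs : card s ≤ A.card + B.card) :
    card (s.filter P) = A.card ∧ card (s.filter (fun a => ¬P a)) = B.card ∧
      ∀ a ∈ s, ¬P a → a ∈ B := by
  have hA_le : A.val ≤ s.filter P :=
    (le_iff_subset A.nodup).2 fun a ha => mem_filter.2 (hA a ha)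
  have hB_le : B.val ≤ s.filter (fun a => ¬P a) :=
    (le_iff_subset B.nodup).2 fun b hb => mem_filter.2 (hB b hb)
  have hsum : card (s.filter P) + card (s.filter (fun a => ¬P a)) = card s := by
    rw [← card_add, filter_add_not]
  have hA_card : A.card ≤ card (s.filter P) := card_le_card hA_le
  have hB_card : B.card ≤ card (s.filter (fun a => ¬P a)) := card_le_card hB_le
  have hB_eq : B.val = s.filter (fun a => ¬P a) :=
    eq_of_le_of_card_le hB_le (by rw [Finset.card_val]; omega)
  refine ⟨by omega, by omega, fun a ha hPa => ?_⟩
  rw [← Finset.mem_val, hB_eq]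
  exact mem_filter.2 ⟨ha, hPa⟩

theorem exists_mem_Ioo_eq_zero_of_mul_neg {f : ℝ → ℝ} {a b : ℝ} (hab : a ≤ b)
    (hf : ContinuousOn f (Icc a b)) (h : f a * f b < 0) : ∃ x ∈ Ioo a b, f x = 0 := by
  rcases mul_neg_iff.1 h with ⟨ha, hb⟩ | ⟨ha, hb⟩
  · exact intermediate_value_Ioo' hab hf ⟨hb, ha⟩
  · exact intermediate_value_Ioo hab hf ⟨ha, hb⟩

theorem exists_strictMono_zeros_of_mul_neg {f : ℝ → ℝ} (hf : Continuous f) {t : ℕ → ℝ}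
    (ht : StrictMono t) (hsign : ∀ k, f (t k) * f (t (k + 1)) < 0) :
    ∃ y : ℕ → ℝ, StrictMono y ∧ (∀ k, y k ∈ Ioo (t k) (t (k + 1))) ∧
      ∀ k, f (y k) = 0 := by
  choose y hy hfy using fun k =>
    exists_mem_Ioo_eq_zero_of_mul_neg (ht k.lt_succ_self).le hf.continuousOn (hsign k)
  exact ⟨y, strictMono_nat_of_lt_succ fun k => (hy k).2.trans (hy (k + 1)).1, hy, hfy⟩

namespace Dpoly

variable (lam mu : ℝ) (w : ℕ)

theorem eval_eq (p : ℂ) : (Dpoly lam mu w).eval p =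
    (1 - lam ^ 2 * p ^ 2) * (1 - mu ^ 2 * p ^ 2) -
      (lam ^ 2 - p ^ 2) * (mu ^ 2 - p ^ 2) * p ^ (2 * w) := by
  simp [Dpoly]

theorem eval_ofReal (x : ℝ) : (Dpoly lam mu w).eval (x : ℂ) =
    ((1 - lam ^ 2 * x ^ 2) * (1 - mu ^ 2 * x ^ 2) -
      (lam ^ 2 - x ^ 2) * (mu ^ 2 - x ^ 2) * (x ^ 2) ^ w : ℝ) := by
  rw [eval_eq, pow_mul]
  push_cast
  ring

theorem comm : Dpoly lam mu w = Dpoly mu lam w := by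
  unfold Dpoly
  ring

theorem natDegree_le : (Dpoly lam mu w).natDegree ≤ 2 * w + 4 := by
  unfold Dpoly
  compute_degree
  omega

theorem eval_zero_eq_one (hw : w ≠ 0) : (Dpoly lam mu w).eval 0 = 1 := by
  simp [eval_eq, hw]

theorem ne_zero (hw : w ≠ 0) : Dpoly lam mu w ≠ 0 := fun h => by
  simpa [h] using eval_zero_eq_one lam mu w hw

noncomputable def circleQuad (q : ℂ) : ℂ := (q⁻¹ - lam ^ 2 * q) * (q⁻¹ - mu ^ 2 * q)

noncomputable def circleFactor (q : ℂ) : ℂ := circleQuad lam mu q * q⁻¹ ^ w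

noncomputable def node (k : ℕ) : ℝ := (k * π - π / 2) / w

variable {lam mu w}

theorem isRoot_neg {p : ℂ} : (Dpoly lam mu w).IsRoot (-p) ↔ (Dpoly lam mu w).IsRoot p := by
  simp only [IsRoot, eval_eq, neg_sq, pow_mul]

theorem isRoot_inv {p : ℂ} (h : (Dpoly lam mu w).IsRoot p) : (Dpoly lam mu w).IsRoot p⁻¹ := by
  rcases eq_or_ne p 0 with rfl | hp
  · rwa [inv_zero]
  have hrel : (Dpoly lam mu w).eval p⁻¹ * p ^ (2 * w + 4) = -(Dpoly lam mu w).eval p := by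
    simp only [eval_eq, inv_pow]
    field_simp
    ring
  rw [h.eq_zero, neg_zero] at hrel
  exact (mul_eq_zero.1 hrel).resolve_right (pow_ne_zero _ hp)

theorem eval_eq_circleFactor_sub {q : ℂ} (hq : q ≠ 0) : (Dpoly lam mu w).eval q =
    q ^ (w + 2) * (circleFactor lam mu w q - circleFactor lam mu w q⁻¹) := by
  simp only [eval_eq, circleFactor, circleQuad, inv_inv, inv_pow]
  field_simp
  ring

theorem circleFactor_conj (q : ℂ) :
    circleFactor lam mu w (conj q) = conj (circleFactor lam mu w q) := by
  simp [circleFactor, circleQuad]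

theorem isRoot_of_circleFactor_im_eq_zero {q : ℂ} (hq : ‖q‖ = 1)
    (h : (circleFactor lam mu w q).im = 0) : (Dpoly lam mu w).IsRoot q := by
  have hq0 : q ≠ 0 := norm_ne_zero_iff.1 (by rw [hq]; exact one_ne_zero)
  rw [IsRoot.def, eval_eq_circleFactor_sub hq0, inv_eq_conj hq, circleFactor_conj, sub_conj,
    h]
  simp

theorem circleQuad_re_le {q : ℂ} (hq : ‖q‖ = 1) :
    (circleQuad lam mu q).re ≤ (1 - lam ^ 2) * (1 - mu ^ 2) := by
  have hq0 : q ≠ 0 := norm_ne_zero_iff.1 (by rw [hq]; exact one_ne_zero)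
  have hexpand : circleQuad lam mu q =
      conj (q ^ 2) + ((lam ^ 2 * mu ^ 2 : ℝ) : ℂ) * q ^ 2 - ((lam ^ 2 + mu ^ 2 : ℝ) : ℂ) := by
    rw [circleQuad, map_pow, ← inv_eq_conj hq]
    field_simp
    push_cast
    ring
  have hre : (q ^ 2).re ≤ 1 := (re_le_norm _).trans (by rw [norm_pow, hq, one_pow])
  rw [hexpand, sub_re, add_re, conj_re, re_ofReal_mul, ofReal_re]
  nlinarith [mul_nonneg (sq_nonneg lam) (sq_nonneg mu)]

theorem node_strictMono (hw : w ≠ 0) : StrictMono (node w) := fun j k hjk => by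
  have : (j : ℝ) < k := by exact_mod_cast hjk
  unfold node
  gcongr

theorem node_two_mul_sub_node_zero (hw : w ≠ 0) : node w (2 * w) - node w 0 = 2 * π := by
  unfold node
  push_cast
  field_simp
  ring

theorem exp_node_inv_pow (hw : w ≠ 0) (k : ℕ) :
    (exp (node w k * I))⁻¹ ^ w = (((-1) ^ k : ℝ) : ℂ) * I := by
  have harg : (w : ℂ) * -(node w k * I) = π / 2 * I + k * -(π * I) := by
    simp only [node]
    push_cast
    field_simp
    ring
  rw [← exp_neg, ← exp_nat_mul, harg, exp_add, exp_pi_div_two_mul_I, exp_nat_mul,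
    exp_neg_pi_mul_I]
  push_cast
  ring

theorem circleFactor_node_im (hw : w ≠ 0) (k : ℕ) :
    (circleFactor lam mu w (exp (node w k * I))).im =
      (-1) ^ k * (circleQuad lam mu (exp (node w k * I))).re := by
  rw [circleFactor, exp_node_inv_pow hw, ← mul_assoc, mul_I_im, re_mul_ofReal, mul_comm]

theorem circleFactor_node_im_mul_neg (hl : 1 < lam ^ 2) (hm : mu ^ 2 < 1) (hw : w ≠ 0)
    (k : ℕ) : (circleFactor lam mu w (exp (node w k * I))).im *
      (circleFactor lam mu w (exp (node w (k + 1) * I))).im < 0 := by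
  have hneg : ∀ j, (circleQuad lam mu (exp (node w j * I))).re < 0 := fun j =>
    (circleQuad_re_le (norm_exp_ofReal_mul_I _)).trans_lt (by nlinarith)
  have hsq : ((-1 : ℝ) ^ k) ^ 2 = 1 := by
    rw [← pow_mul, mul_comm, pow_mul, neg_one_sq, one_pow]
  rw [circleFactor_node_im hw, circleFactor_node_im hw, pow_succ]
  nlinarith [mul_pos_of_neg_of_neg (hneg k) (hneg (k + 1))]

theorem continuous_circleFactor_im :
    Continuous fun θ : ℝ => (circleFactor lam mu w (exp (θ * I))).im := by
  simp only [circleFactor, circleQuad, ← exp_neg]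
  fun_prop

theorem exists_finset_circle_roots (hl : 1 < lam ^ 2) (hm : mu ^ 2 < 1) (hw : w ≠ 0) :
    ∃ A : Finset ℂ, A.card = 2 * w ∧ ∀ a ∈ A, (Dpoly lam mu w).IsRoot a ∧ ‖a‖ = 1 := by
  obtain ⟨y, hy_mono, hy_mem, hy_zero⟩ := exists_strictMono_zeros_of_mul_neg
    continuous_circleFactor_im (node_strictMono hw) (circleFactor_node_im_mul_neg hl hm hw)
  have hy_Ico : ∀ k < 2 * w, y k ∈ Ico (node w 0) (node w (2 * w)) := fun k hk =>
    ⟨((node_strictMono hw).monotone k.zero_le).trans (hy_mem k).1.le,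
      (hy_mem k).2.trans_le ((node_strictMono hw).monotone hk)⟩
  refine ⟨(Finset.range (2 * w)).image fun k => exp (y k * I), ?_, ?_⟩
  · rw [Finset.card_image_of_injOn, Finset.card_range]
    intro j hj k hk hjk
    exact hy_mono.injective <| Circle.exp_injOn_Ico (node_two_mul_sub_node_zero hw).le
      (hy_Ico j (Finset.mem_range.1 hj)) (hy_Ico k (Finset.mem_range.1 hk))
      (Subtype.ext hjk)
  · simp only [Finset.mem_image]
    rintro _ ⟨k, -, rfl⟩
    exact ⟨isRoot_of_circleFactor_im_eq_zero (norm_exp_ofReal_mul_I _) (hy_zero k),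
      norm_exp_ofReal_mul_I _⟩

theorem eventually_exists_isRoot_Ioo (hl : 1 < lam ^ 2) (hm : mu ^ 2 < 1) :
    ∀ᶠ w in atTop, ∃ x ∈ Ioo (0 : ℝ) 1, (Dpoly lam mu w).IsRoot x := by
  have hl' : 1 < |lam| := (one_lt_sq_iff_one_lt_abs lam).1 hl
  obtain ⟨t, hlt, ht1⟩ := exists_between (inv_lt_one_of_one_lt₀ hl')
  have ht0 : 0 < t := (inv_pos.2 (zero_lt_one.trans hl')).trans hlt
  have hlt' : 1 < lam ^ 2 * t ^ 2 := by
    rw [← sq_abs, ← mul_pow]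
    exact one_lt_pow₀ ((inv_lt_iff_one_lt_mul₀' (zero_lt_one.trans hl')).1 hlt) two_ne_zero
  set g : ℕ → ℝ → ℝ := fun w x => (1 - lam ^ 2 * x ^ 2) * (1 - mu ^ 2 * x ^ 2) -
    (lam ^ 2 - x ^ 2) * (mu ^ 2 - x ^ 2) * (x ^ 2) ^ w
  have hlim : Tendsto (fun w => g w t) atTop
      (𝓝 ((1 - lam ^ 2 * t ^ 2) * (1 - mu ^ 2 * t ^ 2))) := by
    simpa only [mul_zero, sub_zero] using
      ((tendsto_pow_atTop_nhds_zero_of_lt_one (sq_nonneg t) (by nlinarith)).const_mul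
        ((lam ^ 2 - t ^ 2) * (mu ^ 2 - t ^ 2))).const_sub
        ((1 - lam ^ 2 * t ^ 2) * (1 - mu ^ 2 * t ^ 2))
  have hlim_neg : (1 - lam ^ 2 * t ^ 2) * (1 - mu ^ 2 * t ^ 2) < 0 :=
    mul_neg_of_neg_of_pos (by linarith) (by nlinarith)
  filter_upwards [hlim.eventually_lt_const hlim_neg, eventually_ne_atTop 0] with w hgt hw
  have hg0 : g w 0 = 1 := by simp [g, hw]
  obtain ⟨x, hx, hgx⟩ := intermediate_value_Ioo' ht0.le
    (by fun_prop : Continuous (g w)).continuousOn ⟨hgt, hg0 ▸ zero_lt_one⟩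
  refine ⟨x, ⟨hx.1, hx.2.trans ht1⟩, ?_⟩
  rw [IsRoot.def, eval_ofReal, ← ofReal_zero, ← hgx]

theorem exists_finset_real_roots {x : ℝ} (hx : x ∈ Ioo 0 1)
    (hroot : (Dpoly lam mu w).IsRoot x) :
    ∃ B : Finset ℂ, B.card = 4 ∧ ∀ b ∈ B, (Dpoly lam mu w).IsRoot b ∧ ‖b‖ ≠ 1 ∧ b.im = 0 := by
  obtain ⟨hx0, hx1⟩ := hx
  have hx_inv : 1 < x⁻¹ := (one_lt_inv₀ hx0).2 hx1
  refine ⟨({x, -x, x⁻¹, -x⁻¹} : Finset ℝ).image ofReal, ?_, ?_⟩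
  · rw [Finset.card_image_of_injective _ ofReal_injective]
    refine Finset.card_eq_four.2 ⟨x, -x, x⁻¹, -x⁻¹, ?_, ?_, ?_, ?_, ?_, ?_, rfl⟩ <;>
      intro h <;> linarith
  · simp only [Finset.mem_image, Finset.mem_insert, Finset.mem_singleton]
    rintro _ ⟨r, hr, rfl⟩
    refine ⟨?_, ?_, ofReal_im r⟩
    · rcases hr with rfl | rfl | rfl | rfl <;>
        simp only [ofReal_neg, ofReal_inv, isRoot_neg, isRoot_inv hroot, hroot]
    · rw [norm_real, Real.norm_eq_abs]
      rcases hr with rfl | rfl | rfl | rfl <;>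
        simp only [abs_neg, abs_of_pos hx0, abs_of_pos (zero_lt_one.trans hx_inv)] <;>
        intro h <;> linarith

open scoped Classical in
theorem eventually_card_roots (hl : 1 < lam ^ 2) (hm : mu ^ 2 < 1) :
    ∀ᶠ w in atTop,
      ((Dpoly lam mu w).roots.filter (fun p => ‖p‖ = 1)).card = 2 * w ∧
      ((Dpoly lam mu w).roots.filter (fun p => ‖p‖ ≠ 1)).card = 4 ∧
      ∀ p ∈ (Dpoly lam mu w).roots, ‖p‖ ≠ 1 → p.im = 0 := by
  filter_upwards [eventually_exists_isRoot_Ioo hl hm, eventually_ne_atTop 0]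
    with w ⟨x, hx, hroot⟩ hw
  obtain ⟨A, hA_card, hA⟩ := exists_finset_circle_roots hl hm hw
  obtain ⟨B, hB_card, hB⟩ := exists_finset_real_roots hx hroot
  have hmem {p : ℂ} (h : (Dpoly lam mu w).IsRoot p) : p ∈ (Dpoly lam mu w).roots :=
    (mem_roots (ne_zero lam mu w hw)).2 h
  obtain ⟨h_on, h_off, h_real⟩ := Multiset.card_filter_eq_of_card_le_add
    (fun a ha => ⟨hmem (hA a ha).1, (hA a ha).2⟩)
    (fun b hb => ⟨hmem (hB b hb).1, (hB b hb).2.1⟩)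
    ((card_roots' _).trans (hA_card ▸ hB_card ▸ natDegree_le lam mu w))
  exact ⟨hA_card ▸ h_on, hB_card ▸ h_off, fun p hp hp1 => (hB p (h_real p hp hp1)).2.2⟩

end Dpoly

open scoped Classical in
/-- for `λ > 1`, `0 ≤ μ < 1` (or symmetrically `0 ≤ λ < 1`, `μ > 1`),
for all sufficiently large `w` the polynomial `D_w` has exactly `2w` roots (with
multiplicity) on the unit circle and exactly `4` roots off the unit circle, all of
which are real. -/
theorem root_count_one_adsorbed (lam mu : ℝ)
    (h : (1 < lam ∧ 0 ≤ mu ∧ mu < 1) ∨ (0 ≤ lam ∧ lam < 1 ∧ 1 < mu)) :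
    ∃ W : ℕ, ∀ w : ℕ, W ≤ w →
      ((Dpoly lam mu w).roots.filter (fun p => ‖p‖ = 1)).card = 2 * w ∧
      ((Dpoly lam mu w).roots.filter (fun p => ‖p‖ ≠ 1)).card = 4 ∧
      ∀ p ∈ (Dpoly lam mu w).roots, ‖p‖ ≠ 1 → p.im = 0 := by
  rcases h with ⟨hl, hm0, hm1⟩ | ⟨hl0, hl1, hm⟩
  · exact eventually_atTop.1 (Dpoly.eventually_card_roots (by nlinarith) (by nlinarith))
  · simpa only [Dpoly.comm mu lam] using eventually_atTop.1
      (Dpoly.eventually_card_roots (lam := mu) (mu := lam) (by nlinarith) (by nlinarith))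
end

section
/- For every integer w ≥ 1 and every even integer n ≥ 0, the partition function of loops satisfies Z_{n,w}(1,2) = (2^{n}/(w+1)) · Σ_{k=0}^{2w+1} sin²((2k+1)π/(2w+2)) · cosⁿ((2k+1)π/(2w+2)). -/
/-- A loop of length `n` in the slit of width `w`: a nearest-neighbour path of heights
`h 0, …, h n` with `h 0 = h n = 0` and all heights in `{0, …, w}` (enforced by taking
values in `Fin (w+1)`). -/
def IsLoop {n w : ℕ} (h : Fin (n + 1) → Fin (w + 1)) : Prop :=
  h 0 = 0 ∧ h (Fin.last n) = 0 ∧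
    ∀ i : Fin n, |((h i.succ : ℤ) - (h i.castSucc : ℤ))| = 1

instance {n w : ℕ} (h : Fin (n + 1) → Fin (w + 1)) : Decidable (IsLoop h) := by
  unfold IsLoop; infer_instance

/-- The partition function of loops,
`Z_{n,w}(a,b) = Σ_h a^{u(h)} b^{v(h)}`, where `u(h)` counts visits to the bottom wall
(excluding the zeroth vertex) and `v(h)` counts visits to the top wall. -/
noncomputable def Z (n w : ℕ) (a b : ℝ) : ℝ :=
  ∑ h : Fin (n + 1) → Fin (w + 1),
    if IsLoop h then
      a ^ (Finset.univ.filter fun i : Fin (n + 1) => i ≠ 0 ∧ (h i : ℕ) = 0).card *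
      b ^ (Finset.univ.filter fun i : Fin (n + 1) => (h i : ℕ) = w).card
    else 0

/-!
Expanding matrix powers into sums over paths, `Z_{n,w}(1,2)` is the `(0,0)` entry of `T ^ n`,
where `T x y = 2` or `1` (according as `y = w` or not) for adjacent heights `x, y` and `0`
otherwise: the weight `2 ^ v(h)` is collected one step at a time, at the endpoint of each step.
For `θ` with `cos ((w + 1) θ) = 0`, the vector `x ↦ sin ((x + 1) θ) / wallWeight x` is an
eigenvector of `T` with eigenvalue `2 cos θ`; the wall condition is exactly what makes the
equation hold in the top row. The `w + 1` angles `θ_k = (2k + 1)π / (2w + 2)`, `k ≤ w`, solve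
it, and a discrete orthogonality relation expresses the first basis vector in these eigenvectors
with coefficients `2 sin θ_k / (w + 1)`. Shifting `k` by `w + 1` turns `θ_k` into `θ_k + π`,
which leaves `sin² θ_k cos^n θ_k` unchanged for even `n`; this doubles the sum to `k ≤ 2w + 1`.
-/

open Real Finset Matrix

namespace Matrix

variable {ι R : Type*} [Fintype ι] [DecidableEq ι] [CommSemiring R]

theorem pow_apply_eq_sum_paths (M : Matrix ι ι R) (n : ℕ) (x y : ι) :
    (M ^ n) x y = ∑ p : Fin (n + 1) → ι,
      if p 0 = x ∧ p (Fin.last n) = y then ∏ i : Fin n, M (p i.castSucc) (p i.succ) else 0 := by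
  induction n generalizing x with
  | zero =>
    rw [pow_zero, one_apply, Fintype.sum_eq_single (fun _ => x)]
    · simp
    · intro p hp
      rw [if_neg]
      rintro ⟨h0, -⟩
      exact hp (funext fun i => by rwa [Fin.fin_one_eq_zero i])
  | succ n ih =>
    rw [← (Fin.consEquiv fun _ => ι).sum_comp, Fintype.sum_prod_type, Finset.sum_comm,
      pow_succ', mul_apply]
    simp_rw [ih, Finset.mul_sum, Fin.consEquiv_apply, Fin.cons_zero, ← Fin.succ_last,
      Fin.cons_succ, Fin.prod_univ_succ, ← Fin.succ_castSucc, Fin.cons_succ,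
      Fin.castSucc_zero, Fin.cons_zero]
    rw [Finset.sum_comm]
    refine Finset.sum_congr rfl fun p _ => ?_
    simp only [mul_ite, mul_zero, ite_and]
    rw [Finset.sum_ite_eq, Finset.sum_ite_eq']
    simp

end Matrix

namespace SlitLoop

variable (w : ℕ)

def wallWeight (y : Fin (w + 1)) : ℝ := if (y : ℕ) = w then 2 else 1

def transferMatrix : Matrix (Fin (w + 1)) (Fin (w + 1)) ℝ :=
  fun x y => (if |(y : ℤ) - x| = 1 then 1 else 0) * wallWeight w y

theorem wallWeight_ne_zero (y : Fin (w + 1)) : wallWeight w y ≠ 0 := by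
  unfold wallWeight
  split_ifs <;> norm_num

theorem wallWeight_zero (hw : 1 ≤ w) : wallWeight w 0 = 1 := by
  rw [wallWeight, if_neg (by simp; omega)]

theorem prod_wallWeight {m : ℕ} (p : Fin m → Fin (w + 1)) :
    ∏ i, wallWeight w (p i) = 2 ^ #{i | (p i : ℕ) = w} := by
  simp only [wallWeight, Finset.prod_ite, prod_const, one_pow, mul_one]

theorem Z_one_two_eq_transferMatrix_pow (hw : 1 ≤ w) (n : ℕ) :
    Z n w 1 2 = (transferMatrix w ^ n) 0 0 := by
  rw [pow_apply_eq_sum_paths, Z]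
  refine Finset.sum_congr rfl fun p _ => ?_
  have hsteps : ∏ i : Fin n, transferMatrix w (p i.castSucc) (p i.succ) =
      (∏ i : Fin n, if |(p i.succ : ℤ) - p i.castSucc| = 1 then 1 else 0) *
        ∏ i : Fin n, wallWeight w (p i.succ) :=
    prod_mul_distrib
  by_cases hends : p 0 = 0 ∧ p (Fin.last n) = 0
  · have hweights : ∏ i : Fin n, wallWeight w (p i.succ) = 2 ^ #{i | (p i : ℕ) = w} := by
      rw [← prod_wallWeight, Fin.prod_univ_succ, hends.1, wallWeight_zero w hw, one_mul]
    rw [if_pos hends, hsteps, hweights, Fintype.prod_boole, one_pow, one_mul]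
    simp only [IsLoop, hends, true_and, ite_mul, one_mul, zero_mul]
  · rw [if_neg hends, if_neg fun hp => hends ⟨hp.1, hp.2.1⟩]

theorem sum_neighbor {M : Type*} [AddCommMonoid M] (x : Fin (w + 1)) (f : ℕ → M) :
    ∑ y : Fin (w + 1), (if |(y : ℤ) - x| = 1 then f (y + 1) else 0) =
      (if 0 < (x : ℕ) then f x else 0) + if (x : ℕ) < w then f (x + 2) else 0 := by
  obtain ⟨x, hx⟩ := x
  have hsplit : ∀ m : ℕ, (if |(m : ℤ) - x| = 1 then f (m + 1) else 0) =
      (if m + 1 = x then f (m + 1) else 0) + if m = x + 1 then f (m + 1) else 0 := by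
    intro m
    have hadj : |(m : ℤ) - x| = 1 ↔ m + 1 = x ∨ m = x + 1 := by
      rw [abs_eq zero_le_one]
      omega
    simp only [hadj]
    split_ifs <;> first | omega | simp
  rw [Fin.sum_univ_eq_sum_range (fun m => if |(m : ℤ) - x| = 1 then f (m + 1) else 0),
    Finset.sum_congr rfl fun m _ => hsplit m, sum_add_distrib, sum_ite_eq']
  congr 1
  · cases x with
    | zero => simp
    | succ x =>
      simp only [Nat.add_right_cancel_iff, sum_ite_eq', mem_range]
      rw [if_pos (by omega), if_pos x.succ_pos]
  · simp

noncomputable def eigenvector (θ : ℝ) (x : Fin (w + 1)) : ℝ :=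
  sin ((x + 1) * θ) / wallWeight w x

theorem transferMatrix_mulVec_eigenvector {θ : ℝ} (hθ : cos ((w + 1) * θ) = 0) :
    transferMatrix w *ᵥ eigenvector w θ = (2 * cos θ) • eigenvector w θ := by
  ext x
  have hrow : (transferMatrix w *ᵥ eigenvector w θ) x =
      ∑ y : Fin (w + 1), if |(y : ℤ) - x| = 1 then sin (((y + 1 : ℕ) : ℝ) * θ) else 0 := by
    rw [mulVec, dotProduct]
    refine Fintype.sum_congr _ _ fun y => ?_
    simp only [transferMatrix, eigenvector, ite_mul, one_mul, zero_mul, Nat.cast_add,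
      Nat.cast_one]
    rw [mul_div_cancel₀ _ (wallWeight_ne_zero w y)]
  have hlower : (if 0 < (x : ℕ) then sin ((x : ℕ) * θ) else 0) = sin (x * θ) := by
    split_ifs with hx
    · rfl
    · simp [Nat.eq_zero_of_not_pos hx]
  rw [hrow, sum_neighbor w x fun m => sin (m * θ), hlower, Pi.smul_apply, smul_eq_mul,
    eigenvector, wallWeight]
  rcases (Nat.lt_succ_iff.mp x.isLt).lt_or_eq with hx | hx
  · rw [if_pos hx, if_neg hx.ne]
    push_cast
    rw [show (x + 2 : ℝ) * θ = (x + 1) * θ + θ by ring,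
      show (x : ℝ) * θ = (x + 1) * θ - θ by ring, sin_add, sin_sub]
    ring
  · rw [if_neg hx.not_lt, if_pos hx, hx, show (w : ℝ) * θ = (w + 1) * θ - θ by ring, sin_sub,
      hθ]
    ring

theorem transferMatrix_pow_mulVec_eigenvector {θ : ℝ} (hθ : cos ((w + 1) * θ) = 0) (n : ℕ) :
    transferMatrix w ^ n *ᵥ eigenvector w θ = (2 * cos θ) ^ n • eigenvector w θ := by
  induction n with
  | zero => simp
  | succ n ih =>
    rw [pow_succ, ← mulVec_mulVec, transferMatrix_mulVec_eigenvector w hθ, mulVec_smul, ih,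
      smul_smul, pow_succ']

noncomputable def loopAngle (k : ℕ) : ℝ := (2 * k + 1) * π / (2 * w + 2)

theorem cos_succ_mul_loopAngle (k : ℕ) : cos ((w + 1) * loopAngle w k) = 0 :=
  cos_eq_zero_iff.mpr ⟨k, by rw [loopAngle]; field_simp; push_cast; ring⟩

theorem loopAngle_add_succ (k : ℕ) : loopAngle w (w + 1 + k) = loopAngle w k + π := by
  rw [loopAngle, loopAngle]
  field_simp
  push_cast
  ring

theorem sum_range_cos_mul_loopAngle {j : ℕ} (hj₀ : 0 < j) (hj : j < 2 * w + 2) :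
    ∑ k ∈ range (w + 1), cos (j * loopAngle w k) = 0 := by
  set β : ℝ := j * π / (2 * w + 2) with hβ_def
  have hβ : sin β ≠ 0 := by
    refine (sin_pos_of_pos_of_lt_pi (by positivity) ?_).ne'
    rw [hβ_def, div_lt_iff₀ (by positivity)]
    have : (j : ℝ) < 2 * w + 2 := by exact_mod_cast hj
    nlinarith [pi_pos]
  have hβ_mul : ((w + 1 : ℕ) : ℝ) * β = j * π / 2 := by
    rw [hβ_def]
    push_cast
    field_simp
  have hend : sin (j * π / 2) * cos (j * π / 2) = 0 := by
    have hdouble := sin_two_mul (j * π / 2)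
    rw [show 2 * (j * π / 2) = j * π by ring, sin_nat_mul_pi] at hdouble
    linarith
  have hsum := Real.sin_mul_sum_cos (w + 1) (2 * β) β
  rw [show ((w + 1 : ℕ) - 1) * (2 * β) / 2 + β = ((w + 1 : ℕ) : ℝ) * β by push_cast; ring,
    show 2 * β / 2 = β by ring,
    show ((w + 1 : ℕ) : ℝ) * (2 * β) / 2 = ((w + 1 : ℕ) : ℝ) * β by ring, hβ_mul, hend] at hsum
  simp only [show ∀ k : ℕ, 2 * β * k + β = j * loopAngle w k from fun k => by
    rw [hβ_def, loopAngle]; ring] at hsum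
  exact (mul_eq_zero.mp hsum).resolve_left hβ

theorem sum_range_sin_loopAngle_mul_sin {x : ℕ} (hx : x < 2 * w) :
    ∑ k ∈ range (w + 1), sin (loopAngle w k) * sin ((x + 1) * loopAngle w k) =
      if x = 0 then ((w : ℝ) + 1) / 2 else 0 := by
  have hprod : ∀ a : ℝ,
      sin a * sin ((x + 1) * a) = (cos (x * a) - cos ((x + 2 : ℕ) * a)) / 2 := by
    intro a
    rw [show (x : ℝ) * a = (x + 1) * a - a by ring,
      show ((x + 2 : ℕ) : ℝ) * a = (x + 1) * a + a by push_cast; ring, cos_sub, cos_add]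
    ring
  simp only [hprod, ← sum_div, sum_sub_distrib,
    sum_range_cos_mul_loopAngle w (j := x + 2) (by omega) (by omega), sub_zero]
  split_ifs with hx₀
  · simp [hx₀]
  · rw [sum_range_cos_mul_loopAngle w (Nat.pos_of_ne_zero hx₀) (by omega), zero_div]

theorem sum_smul_eigenvector_loopAngle (hw : 1 ≤ w) :
    ∑ k ∈ range (w + 1), (2 / (w + 1) * sin (loopAngle w k)) • eigenvector w (loopAngle w k) =
      Pi.single 0 1 := by
  ext x
  have hx : (x : ℕ) < 2 * w := by omega
  simp only [Finset.sum_apply, Pi.smul_apply, smul_eq_mul, eigenvector]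
  have hterm : ∀ k, 2 / (w + 1) * sin (loopAngle w k) *
      (sin ((x + 1) * loopAngle w k) / wallWeight w x) =
        2 / (w + 1) / wallWeight w x * (sin (loopAngle w k) * sin ((x + 1) * loopAngle w k)) :=
    fun k => by ring
  rw [sum_congr rfl fun k _ => hterm k, ← mul_sum, sum_range_sin_loopAngle_mul_sin w hx]
  rcases eq_or_ne x 0 with rfl | hx₀
  · rw [Fin.val_zero, if_pos rfl, wallWeight_zero w hw, Pi.single_eq_same]
    field_simp
  · rw [if_neg (Fin.val_ne_zero_iff.mpr hx₀), Pi.single_eq_of_ne hx₀, mul_zero]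

theorem transferMatrix_pow_apply_zero_zero (hw : 1 ≤ w) (n : ℕ) :
    (transferMatrix w ^ n) 0 0 =
      ∑ k ∈ range (w + 1),
        2 / (w + 1) * sin (loopAngle w k) ^ 2 * (2 * cos (loopAngle w k)) ^ n := by
  have heig₀ : ∀ k, eigenvector w (loopAngle w k) 0 = sin (loopAngle w k) := fun k => by
    simp [eigenvector, wallWeight_zero w hw]
  calc (transferMatrix w ^ n) 0 0 = (transferMatrix w ^ n *ᵥ Pi.single 0 1) 0 := by
        rw [mulVec_single_one, col_apply]
    _ = _ := by
      rw [← sum_smul_eigenvector_loopAngle w hw, mulVec_sum, Finset.sum_apply]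
      refine sum_congr rfl fun k _ => ?_
      rw [mulVec_smul, transferMatrix_pow_mulVec_eigenvector w (cos_succ_mul_loopAngle w k),
        smul_smul, Pi.smul_apply, smul_eq_mul, heig₀]
      ring

theorem sum_range_loopAngle_eq_two_mul {n : ℕ} (hn : Even n) :
    ∑ k ∈ range (2 * w + 2), sin (loopAngle w k) ^ 2 * cos (loopAngle w k) ^ n =
      2 * ∑ k ∈ range (w + 1), sin (loopAngle w k) ^ 2 * cos (loopAngle w k) ^ n := by
  rw [show 2 * w + 2 = (w + 1) + (w + 1) by ring, sum_range_add]
  simp only [loopAngle_add_succ, sin_add_pi, cos_add_pi, neg_sq, hn.neg_pow]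
  ring

end SlitLoop

/-- exact expression for `Z_{n,w}(1,2)` for even `n`. -/
theorem Z_one_two (w n : ℕ) (hw : 1 ≤ w) (hn : Even n) :
    Z n w 1 2 = 2 ^ n / ((w : ℝ) + 1) *
      ∑ k ∈ Finset.range (2 * w + 2),
        Real.sin ((2 * (k : ℝ) + 1) * Real.pi / (2 * (w : ℝ) + 2)) ^ 2 *
          Real.cos ((2 * (k : ℝ) + 1) * Real.pi / (2 * (w : ℝ) + 2)) ^ n := by
  rw [SlitLoop.Z_one_two_eq_transferMatrix_pow w hw n,
    SlitLoop.transferMatrix_pow_apply_zero_zero w hw n]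
  change _ = 2 ^ n / ((w : ℝ) + 1) * ∑ k ∈ range (2 * w + 2),
    sin (SlitLoop.loopAngle w k) ^ 2 * cos (SlitLoop.loopAngle w k) ^ n
  rw [SlitLoop.sum_range_loopAngle_eq_two_mul w hn, mul_sum, mul_sum]
  refine sum_congr rfl fun k _ => ?_
  rw [mul_pow]
  ring
end

section
/- For every integer w ≥ 1 and every even integer n ≥ 0, the partition function of loops satisfies Z_{n,w}(2,1) = (2^{n}/(2(w+1))) · Σ_{k=0}^{2w+1} cosⁿ((2k+1)π/(2w+2)). -/
/-!
`Z_{n,w}(a,1)` is the `(0,0)` entry of `Tⁿ`, where `T x y = [|x - y| = 1] · a^[y = 0]` is the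
transfer matrix. For `a = 2` the vectors `x ↦ cos (x θ_k)`, `θ_k = (2k+1)π/(2w+2)`, are left
eigenvectors of `T` with eigenvalues `2 cos θ_k`: the doubled weight at the bottom wall stands in
for the reflected neighbour `cos (-θ) = cos θ`, and `cos ((w+1) θ_k) = 0` is the condition at the
top wall. The discrete orthogonality `∑_{k ≤ w} cos (x θ_k) = (w+1) [x = 0]` for `x ≤ w` then
extracts the `(0,0)` entry: `(w+1) (Tⁿ)₀₀ = ∑_{k ≤ w} (2 cos θ_k)ⁿ`. Finally
`θ_{2w+1-k} = 2π - θ_k`, so the sum over `k < 2w+2` is twice the sum over `k ≤ w`, for every `n`.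
-/

open Finset Matrix Real

theorem Matrix.pow_apply_eq_sum_paths_s10 {ι R : Type*} [Fintype ι] [DecidableEq ι] [CommSemiring R]
    (M : Matrix ι ι R) (n : ℕ) (i j : ι) :
    (M ^ n) i j = ∑ h : Fin (n + 1) → ι,
      if h 0 = i ∧ h (Fin.last n) = j then ∏ t : Fin n, M (h t.castSucc) (h t.succ) else 0 := by
  induction n generalizing i with
  | zero =>
    rw [← (Equiv.funUnique (Fin 1) ι).symm.sum_comp]
    simp [one_apply, Fin.last, ite_and]
  | succ n ih =>
    rw [pow_succ', mul_apply, ← (Fin.consEquiv fun _ => ι).sum_comp, Fintype.sum_prod_type]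
    simp_rw [ih, mul_sum, Fin.consEquiv_apply, ← Fin.succ_last, Fin.prod_univ_succ, Fin.cons_zero,
      Fin.cons_succ, ← Fin.succ_castSucc, Fin.cons_succ]
    rw [sum_comm, sum_comm (γ := ι)]
    refine sum_congr rfl fun g _ => ?_
    simp [ite_and]

theorem Matrix.vecMul_pow_of_vecMul_eq_smul {ι R : Type*} [Fintype ι] [DecidableEq ι]
    [CommSemiring R] {M : Matrix ι ι R} {v : ι → R} {c : R} (hv : v ᵥ* M = c • v) (n : ℕ) :
    v ᵥ* (M ^ n) = c ^ n • v := by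
  induction n with
  | zero => simp
  | succ n ih => rw [pow_succ, ← vecMul_vecMul, ih, smul_vecMul, hv, smul_smul, pow_succ]

noncomputable def loopTransfer (w : ℕ) (a : ℝ) : Matrix (Fin (w + 1)) (Fin (w + 1)) ℝ :=
  of fun x y => if |(y : ℤ) - x| = 1 then (if (y : ℕ) = 0 then a else 1) else 0

theorem Z_eq_loopTransfer_pow_apply (n w : ℕ) (a : ℝ) :
    Z n w a 1 = (loopTransfer w a ^ n) 0 0 := by
  rw [pow_apply_eq_sum_paths_s10, Z]
  refine sum_congr rfl fun h _ => ?_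
  simp only [loopTransfer, of_apply, Fintype.prod_ite_zero, one_pow, mul_one, IsLoop, ← ite_and,
    and_assoc]
  refine if_congr Iff.rfl ?_ rfl
  calc a ^ #{i | i ≠ 0 ∧ (h i : ℕ) = 0}
      = ∏ i : Fin (n + 1), if i ≠ 0 ∧ (h i : ℕ) = 0 then a else 1 := by
        rw [prod_ite, prod_const, prod_const_one, mul_one]
    _ = ∏ t : Fin n, if (h t.succ : ℕ) = 0 then a else 1 := by
        simp [Fin.prod_univ_succ, Fin.succ_ne_zero]

theorem Fin.sum_ite_abs_sub_eq_one {R : Type*} [AddCommMonoid R] (w : ℕ) (g : ℕ → R)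
    (y : Fin (w + 1)) :
    ∑ x : Fin (w + 1), (if |(y : ℤ) - x| = 1 then g x else 0) =
      (if (y : ℕ) < w then g (y + 1) else 0) + (if 0 < (y : ℕ) then g (y - 1) else 0) := by
  have hsplit : ∀ x : ℕ, (if |(y : ℤ) - x| = 1 then g x else 0) =
      (if (y : ℕ) + 1 = x then g x else 0) +
        (if 0 < (y : ℕ) then (if (y : ℕ) - 1 = x then g x else 0) else 0) := by
    intro x
    have hadj : |(y : ℤ) - x| = 1 ↔ (y : ℕ) + 1 = x ∨ (0 < (y : ℕ) ∧ (y : ℕ) - 1 = x) := by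
      rw [abs_eq zero_le_one]; omega
    simp only [hadj]
    split_ifs <;> first | (exfalso; omega) | simp
  rw [Fin.sum_univ_eq_sum_range (fun x => if |(y : ℤ) - x| = 1 then g x else 0),
    sum_congr rfl fun x _ => hsplit x, sum_add_distrib, sum_ite_eq]
  congr 1
  · exact if_congr (by simp) rfl rfl
  · split_ifs with hy
    · rw [sum_ite_eq, if_pos (by simp)]
    · exact sum_const_zero

theorem cos_vecMul_loopTransfer_two {w : ℕ} {θ : ℝ} (hθ : cos ((w + 1) * θ) = 0) :
    (fun x : Fin (w + 1) => cos (x * θ)) ᵥ* loopTransfer w 2 =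
      (2 * cos θ) • fun x : Fin (w + 1) => cos (x * θ) := by
  funext y
  have hentry : ∀ x : Fin (w + 1), cos (x * θ) * loopTransfer w 2 x y =
      (if |(y : ℤ) - x| = 1 then cos ((x : ℕ) * θ) else 0) * (if (y : ℕ) = 0 then 2 else 1) := by
    intro x
    simp only [loopTransfer, of_apply]
    split_ifs <;> simp
  have htop : (if (y : ℕ) < w then cos (((y + 1 : ℕ) : ℝ) * θ) else 0) =
      cos (((y : ℝ) + 1) * θ) := by
    split_ifs with hy
    · push_cast; rfl
    · rw [show (y : ℕ) = w by omega, hθ]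
  simp only [vecMul, dotProduct, hentry, ← sum_mul, Pi.smul_apply, smul_eq_mul]
  rw [Fin.sum_ite_abs_sub_eq_one w (fun m => cos (m * θ)) y, htop]
  rcases Nat.eq_zero_or_pos (y : ℕ) with hy | hy
  · rw [if_neg (by omega), if_pos hy, hy, Nat.cast_zero, zero_add, one_mul, zero_mul, cos_zero]
    ring
  · rw [if_pos hy, if_neg hy.ne', Nat.cast_sub hy, Nat.cast_one, mul_one]
    simp only [add_mul, sub_mul, one_mul, cos_add, cos_sub]
    ring

theorem two_mul_sin_mul_sum_range_cos_odd_mul (α : ℝ) (m : ℕ) :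
    2 * sin α * ∑ k ∈ range m, cos ((2 * k + 1) * α) = sin (2 * m * α) := by
  induction m with
  | zero => simp
  | succ m ih =>
    have hstep : 2 * sin α * cos ((2 * m + 1) * α) = sin (2 * (m + 1) * α) - sin (2 * m * α) := by
      rw [show 2 * ((m : ℝ) + 1) * α = (2 * m + 1) * α + α by ring,
        show 2 * (m : ℝ) * α = (2 * m + 1) * α - α by ring, sin_add, sin_sub]
      ring
    rw [sum_range_succ, mul_add, ih, hstep]
    push_cast
    ring

noncomputable def loopAngle (w k : ℕ) : ℝ := (2 * (k : ℝ) + 1) * π / (2 * (w : ℝ) + 2)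

theorem cos_succ_mul_loopAngle (w k : ℕ) : cos ((w + 1) * loopAngle w k) = 0 := by
  rw [cos_eq_zero_iff]
  refine ⟨k, ?_⟩
  rw [loopAngle]
  field_simp
  push_cast
  ring

theorem sum_range_cos_succ_mul_loopAngle {w x : ℕ} (hx : x ≤ w) :
    ∑ k ∈ range (w + 1), cos (x * loopAngle w k) = if x = 0 then (w + 1 : ℝ) else 0 := by
  split_ifs with hx0
  · simp [hx0]
  set α : ℝ := x * π / (2 * w + 2)
  have hα : 0 < α ∧ α < π := by
    have hx' : (0 : ℝ) < x := by exact_mod_cast Nat.pos_of_ne_zero hx0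
    have hxw : (x : ℝ) < 2 * w + 2 := by
      have : (x : ℝ) ≤ w := by exact_mod_cast hx
      linarith
    constructor
    · positivity
    · rw [div_lt_iff₀ (by positivity)]
      nlinarith [pi_pos]
  have hsin : sin α ≠ 0 := (sin_pos_of_pos_of_lt_pi hα.1 hα.2).ne'
  have hend : sin (2 * ((w + 1 : ℕ) : ℝ) * α) = 0 := by
    rw [show 2 * ((w + 1 : ℕ) : ℝ) * α = x * π by simp only [α]; push_cast; field_simp]
    exact sin_nat_mul_pi x
  have hsum := two_mul_sin_mul_sum_range_cos_odd_mul α (w + 1)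
  rw [hend] at hsum
  have hangle : ∀ k : ℕ, (x : ℝ) * loopAngle w k = (2 * k + 1) * α := by
    intro k
    simp only [loopAngle, α]
    ring
  simp only [hangle]
  exact (mul_eq_zero.mp hsum).resolve_left (mul_ne_zero two_ne_zero hsin)

theorem sum_range_cos_loopAngle_pow (w n : ℕ) :
    ∑ k ∈ range (2 * w + 2), cos (loopAngle w k) ^ n =
      2 * ∑ k ∈ range (w + 1), cos (loopAngle w k) ^ n := by
  have hreflect : ∀ k ∈ range (w + 1),
      cos (loopAngle w (w + 1 + k)) ^ n = cos (loopAngle w (w - k)) ^ n := by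
    intro k hk
    rw [mem_range] at hk
    rw [← cos_two_pi_sub]
    congr 2
    simp only [loopAngle]
    rw [Nat.cast_sub (by omega)]
    field_simp
    push_cast
    ring
  calc ∑ k ∈ range (2 * w + 2), cos (loopAngle w k) ^ n
      = ∑ k ∈ range (w + 1), cos (loopAngle w k) ^ n +
          ∑ k ∈ range (w + 1), cos (loopAngle w (w + 1 + k)) ^ n := by
        rw [← sum_range_add, two_mul, add_add_add_comm]
    _ = ∑ k ∈ range (w + 1), cos (loopAngle w k) ^ n +
          ∑ k ∈ range (w + 1), cos (loopAngle w (w + 1 - 1 - k)) ^ n := by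
        rw [sum_congr rfl hreflect]
        rfl
    _ = 2 * ∑ k ∈ range (w + 1), cos (loopAngle w k) ^ n := by
        rw [sum_range_reflect (fun k => cos (loopAngle w k) ^ n), two_mul]

theorem succ_mul_loopTransfer_two_pow_apply_zero_zero (w n : ℕ) :
    ((w : ℝ) + 1) * (loopTransfer w 2 ^ n) 0 0 =
      ∑ k ∈ range (w + 1), (2 * cos (loopAngle w k)) ^ n := by
  have horth : ∀ x : Fin (w + 1),
      ∑ k ∈ range (w + 1), cos (x * loopAngle w k) = if x = 0 then (w + 1 : ℝ) else 0 := by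
    intro x
    rw [sum_range_cos_succ_mul_loopAngle x.is_le]
    exact if_congr Fin.val_eq_zero_iff rfl rfl
  have heigen : ∀ k, ∑ x : Fin (w + 1), cos (x * loopAngle w k) * (loopTransfer w 2 ^ n) x 0 =
      (2 * cos (loopAngle w k)) ^ n := by
    intro k
    have := congrFun (vecMul_pow_of_vecMul_eq_smul
      (cos_vecMul_loopTransfer_two (cos_succ_mul_loopAngle w k)) n) 0
    simpa [vecMul, dotProduct] using this
  calc ((w : ℝ) + 1) * (loopTransfer w 2 ^ n) 0 0
      = ∑ x : Fin (w + 1),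
          (∑ k ∈ range (w + 1), cos (x * loopAngle w k)) * (loopTransfer w 2 ^ n) x 0 := by
        simp [horth]
    _ = ∑ k ∈ range (w + 1),
          ∑ x : Fin (w + 1), cos (x * loopAngle w k) * (loopTransfer w 2 ^ n) x 0 := by
        simp_rw [sum_mul]
        exact sum_comm
    _ = _ := sum_congr rfl fun k _ => heigen k

theorem Z_two_one_general (w n : ℕ) :
    Z n w 2 1 = 2 ^ n / (2 * ((w : ℝ) + 1)) *
      ∑ k ∈ Finset.range (2 * w + 2),
        Real.cos ((2 * (k : ℝ) + 1) * Real.pi / (2 * (w : ℝ) + 2)) ^ n := by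
  have hw : (w : ℝ) + 1 ≠ 0 := by positivity
  have hZ : Z n w 2 1 = (∑ k ∈ range (w + 1), (2 * cos (loopAngle w k)) ^ n) / (w + 1) := by
    rw [Z_eq_loopTransfer_pow_apply, eq_div_iff hw, mul_comm,
      succ_mul_loopTransfer_two_pow_apply_zero_zero]
  change _ = _ * ∑ k ∈ range (2 * w + 2), cos (loopAngle w k) ^ n
  rw [sum_range_cos_loopAngle_pow, hZ]
  simp_rw [mul_pow, ← mul_sum]
  field_simp

/-- exact expression for `Z_{n,w}(2,1)` for even `n`. -/
theorem Z_two_one (w n : ℕ) (hw : 1 ≤ w) (hn : Even n) :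
    Z n w 2 1 = 2 ^ n / (2 * ((w : ℝ) + 1)) *
      ∑ k ∈ Finset.range (2 * w + 2),
        Real.cos ((2 * (k : ℝ) + 1) * Real.pi / (2 * (w : ℝ) + 2)) ^ n :=
  Z_two_one_general w n
end
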